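/- arXiv:1603.09495 — 4 statements merged into one kernel-verified Lean document; each statement's English description precedes it below -/
import Mathlib

section
/- If the equalization is proper (i.e., ŝ' ∈ Φ̂(ŝ,a) iff every concrete state s' ∈ ŝ' has some s ∈ ŝ with s' ∈ Φ(s,a)), and ŝ₂ ∈ Φ_B(ŝ₁) witnessed by a plan σ = ⟨a₁,…,aₙ⟩ with ŝ₂ ∈ Res(ŝ₁,σ) and no error state occurring along σ, then for every concrete state s₂ ∈ ŝ₂ there exists a concrete state s₁ ∈ ŝ₁ and a trajectory s₁ →^σ s₂ in the original transition system. -/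
/-- A trajectory `s →^σ s'` in the original transition system. -/
def Traj {S A : Type} (Φ : S → A → Set S) : S → List A → S → Prop
  | s, [], t => s = t
  | s, a :: σ, t => ∃ s', s' ∈ Φ s a ∧ Traj Φ s' σ t

/-- Lift a transition function on equalized states to `Option Ω`,
    where `none` plays the role of the error state `w_err`. -/
def liftPhi {A Ω : Type} (Φh : Ω → A → Set Ω) : Option Ω → A → Set (Option Ω)
  | none, _ => ∅
  | some ω, a => (fun x => some x) '' Φh ω a

open Classical in
/-- `Res(w, σ)`: resulting equalized states of executing plan `σ` from `w`;
    `none` is the error state `w_err`. -/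
noncomputable def Res {A Ω : Type} (Φh : Ω → A → Set Ω) :
    Option Ω → List A → Set (Option Ω)
  | e, [] => {e}
  | e, a :: σ =>
      if (liftPhi Φh e a).Nonempty then ⋃ e' ∈ liftPhi Φh e a, Res Φh e' σ
      else {none}

/-- soundness under proper equalization. -/
theorem statement0 {S A Ω : Type} (Φ : S → A → Set S) (h : S → Ω)
    (Φh : Ω → A → Set Ω)
    -- properness: w' ∈ Φ̂(w,a) iff every concrete s' ∈ w' has some s ∈ w with s' ∈ Φ(s,a)
    (hproper : ∀ (w : Ω) (a : A) (w' : Ω),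
      w' ∈ Φh w a ↔ ∀ s', h s' = w' → ∃ s, h s = w ∧ s' ∈ Φ s a)
    (w1 w2 : Ω) (σ : List A)
    -- w2 ∈ Res(w1,σ), witnessing w2 ∈ Φ_B(w1)
    (hres : some w2 ∈ Res Φh (some w1) σ)
    -- no error state occurs along σ
    (hnoerr : none ∉ Res Φh (some w1) σ) :
    ∀ s₂, h s₂ = w2 → ∃ s₁, h s₁ = w1 ∧ Traj Φ s₁ σ s₂ := by
  induction σ generalizing w1 with
  | nil =>
      simp only [Res, Set.mem_singleton_iff, Option.some.injEq] at hres
      intro s₂ hs₂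
      exact ⟨s₂, by rw [hs₂, hres], rfl⟩
  | cons a σ ih =>
      simp only [Res] at hres hnoerr
      by_cases hne : (liftPhi Φh (some w1) a).Nonempty
      · rw [if_pos hne] at hres hnoerr
        simp only [Set.mem_iUnion] at hres
        obtain ⟨e', he', hres'⟩ := hres
        obtain ⟨w', hw', rfl⟩ := he'
        have hnoerr' : none ∉ Res Φh (some w') σ := by
          intro hc
          exact hnoerr (Set.mem_iUnion.mpr ⟨some w', Set.mem_iUnion.mpr
            ⟨⟨w', hw', rfl⟩, hc⟩⟩)
        intro s₂ hs₂
        obtain ⟨s', hs', htraj⟩ := ih w' hres' hnoerr' s₂ hs₂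
        obtain ⟨s₁, hs₁, hΦ⟩ := (hproper w1 a w').mp hw' s' hs'
        exact ⟨s₁, hs₁, s', hΦ, htraj⟩
      · rw [if_neg hne] at hres
        simp at hres
end

section
/- Suppose initial-state clustering holds: for all s ∈ S₀, h⁻¹(h(s)) ⊆ S₀. If the equalization is proper and there is a finite run ŝ₀, ŝ₁, …, ŝ_k in the equalized transition system with ŝ₀ an equalized initial state, ŝ_{i+1} ∈ Φ_B(ŝ_i) for all i (each transition witnessed by a plan with no error state), and ŝ_k ⊨ g_∞ (every concrete state in ŝ_k satisfies g_∞), then there exists a concrete initial state s₀ ∈ S₀ and a trajectory in the original transition system from s₀ to some concrete state s satisfying g_∞. -/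
theorem traj_append {S A : Type} (Φ : S → A → Set S) :
    ∀ (σ₁ : List A) (s s' s'' : S) (σ₂ : List A),
      Traj Φ s σ₁ s' → Traj Φ s' σ₂ s'' → Traj Φ s (σ₁ ++ σ₂) s''
  | [], s, s', s'', σ₂, h1, h2 => by cases h1; exact h2
  | a :: σ, s, s', s'', σ₂, h1, h2 => by
      obtain ⟨t, ht, htraj⟩ := h1
      exact ⟨t, ht, traj_append Φ σ t s' s'' σ₂ htraj h2⟩
      -- note order of implicit args
      

theorem res_lift {S A Ω : Type} (Φ : S → A → Set S) (h : S → Ω)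
    (Φh : Ω → A → Set Ω)
    (hproper : ∀ (w : Ω) (a : A) (w' : Ω),
      w' ∈ Φh w a ↔ ∀ s', h s' = w' → ∃ s, h s = w ∧ s' ∈ Φ s a) :
    ∀ (σ : List A) (w w' : Ω), some w' ∈ Res Φh (some w) σ →
      ∀ s', h s' = w' → ∃ s, h s = w ∧ ∃ τ, Traj Φ s τ s'
  | [], w, w', hmem, s', hs' => by
      simp only [Res, Set.mem_singleton_iff, Option.some.injEq] at hmem
      exact ⟨s', by rw [hs', hmem], [], rfl⟩
  | a :: σ, w, w', hmem, s', hs' => by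
      simp only [Res] at hmem
      split_ifs at hmem with hne
      · simp only [Set.mem_iUnion] at hmem
        obtain ⟨e', he', hmem'⟩ := hmem
        obtain ⟨w'', hw'', rfl⟩ := he'
        obtain ⟨s'', hs'', τ, htraj⟩ := res_lift Φ h Φh hproper σ w'' w' hmem' s' hs'
        obtain ⟨s, hs, hstep⟩ := (hproper w a w'').mp hw'' s'' hs''
        exact ⟨s, hs, a :: τ, s'', hstep, htraj⟩
      · simp at hmem

/-- corollary — a run in the equalized system reaching the main goal,
under proper equalization and initial-state clustering, yields a concrete trajectory
from a concrete initial state to a concrete state satisfying `g∞`. -/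
theorem statement1 {S A Ω : Type} (Φ : S → A → Set S) (h : S → Ω)
    (Φh : Ω → A → Set Ω) (S₀ : Set S) (ginf : S → Prop)
    -- equalized states are nonempty clusters of concrete states
    (hfib : ∀ ω : Ω, ∃ s, h s = ω)
    -- initial-state clustering: h⁻¹(h(s)) ⊆ S₀ for s ∈ S₀
    (hinit : ∀ s ∈ S₀, ∀ t, h t = h s → t ∈ S₀)
    -- properness
    (hproper : ∀ (w : Ω) (a : A) (w' : Ω),
      w' ∈ Φh w a ↔ ∀ s', h s' = w' → ∃ s, h s = w ∧ s' ∈ Φ s a)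
    (k : ℕ) (f : ℕ → Ω)
    -- f 0 is an equalized initial state
    (hrun0 : ∃ s ∈ S₀, h s = f 0)
    -- each step is witnessed by a plan with no error state
    (hstep : ∀ i < k, ∃ σ : List A,
      some (f (i + 1)) ∈ Res Φh (some (f i)) σ ∧ none ∉ Res Φh (some (f i)) σ)
    -- the final equalized state satisfies the main goal
    (hgoal : ∀ s, h s = f k → ginf s) :
    ∃ s₀ ∈ S₀, ∃ (σ : List A) (s : S), Traj Φ s₀ σ s ∧ ginf s := by
  have claim : ∀ j ≤ k, ∀ s', h s' = f j →
      ∃ s, h s = f 0 ∧ ∃ τ, Traj Φ s τ s' := by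
    intro j
    induction j with
    | zero => exact fun _ s' hs' => ⟨s', hs', [], rfl⟩
    | succ j ih =>
        intro hj s' hs'
        obtain ⟨σ, hmem, _⟩ := hstep j (by omega)
        obtain ⟨s'', hs'', τ, htraj⟩ := res_lift Φ h Φh hproper σ (f j) (f (j+1)) hmem s' hs'
        obtain ⟨s, hs, τ₀, htraj₀⟩ := ih (by omega) s'' hs''
        exact ⟨s, hs, τ₀ ++ τ, traj_append Φ τ₀ s s'' s' τ htraj₀ htraj⟩
  obtain ⟨sinit, hsinit, hhsinit⟩ := hrun0
  obtain ⟨sk, hsk⟩ := hfib (f k)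
  obtain ⟨s, hs, τ, htraj⟩ := claim k le_rfl sk hsk
  exact ⟨s, hinit sinit hsinit s (by rw [hs, hhsinit]), τ, sk, htraj, hgoal sk hsk⟩
end

section
/- Under the strengthened condition ŝ' ∈ Φ̂(ŝ,a) ↔ ∀s ∈ ŝ, ∃s' ∈ ŝ' : s' ∈ Φ(s,a), every action a with Φ̂(ŝ,a) ≠ ∅ is executable at every concrete state s ∈ ŝ; consequently, for any plan σ executed from ŝ with no error state in Res(ŝ,σ), every concrete state s ∈ ŝ admits a full trajectory s →^σ s' for some s' with h(s') belonging to Res(ŝ,σ). -/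
/-- under the strengthened condition (2), every action with a
nonempty lifted transition is executable at every concrete state of the fiber,
and error-free plans can be fully executed from every concrete state. -/
theorem statement2 {S A Ω : Type} (Φ : S → A → Set S) (h : S → Ω)
    (Φh : Ω → A → Set Ω)
    -- strengthened condition (2)
    (hcond2 : ∀ (w : Ω) (a : A) (w' : Ω),
      w' ∈ Φh w a ↔ ∀ s, h s = w → ∃ s', h s' = w' ∧ s' ∈ Φ s a) :
    -- executability of actions with nonempty lifted transition
    (∀ (w : Ω) (a : A), (Φh w a).Nonempty → ∀ s, h s = w → (Φ s a).Nonempty) ∧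
    -- error-free plans yield full concrete trajectories from every state of the fiber
    (∀ (w : Ω) (σ : List A), none ∉ Res Φh (some w) σ →
      ∀ s, h s = w → ∃ s', Traj Φ s σ s' ∧ some (h s') ∈ Res Φh (some w) σ) := by
  constructor
  · rintro w a ⟨w', hw'⟩ s hs
    obtain ⟨s', -, hs'⟩ := (hcond2 w a w').1 hw' s hs
    exact ⟨s', hs'⟩
  · intro w σ
    induction σ generalizing w with
    | nil =>
      intro _ s hs
      exact ⟨s, rfl, by simp [Res, hs]⟩
    | cons a σ ih =>
      intro hne s hs
      by_cases hnonempty : (liftPhi Φh (some w) a).Nonempty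
      · obtain ⟨w', hw'⟩ := hnonempty
        obtain ⟨w'', hw'', rfl⟩ := hw'
        obtain ⟨s', hhs', hs'⟩ := (hcond2 w a w'').1 hw'' s hs
        have hmem' : some w'' ∈ liftPhi Φh (some w) a := ⟨w'', hw'', rfl⟩
        have hpos : (liftPhi Φh (some w) a).Nonempty := ⟨some w'', hmem'⟩
        have hsub : Res Φh (some w'') σ ⊆ Res Φh (some w) (a :: σ) := by
          intro x hx
          simp only [Res, if_pos hpos]
          exact Set.mem_biUnion hmem' hx
        have hne' : none ∉ Res Φh (some w'') σ := fun hmem => hne (hsub hmem)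
        obtain ⟨t, ht, htmem⟩ := ih w'' hne' s' hhs'
        exact ⟨t, ⟨s', hs', ht⟩, hsub htmem⟩
      · exfalso
        apply hne
        simp [Res, if_neg hnonempty]
end

section
/- The policy works (every infinite run from an initial state contains a state satisfying g_∞) if and only if there is no reachable state ŝ ∈ R^∞ such that ŝ does not satisfy g_∞ and ŝ lies on a cycle of g_∞-avoiding states reachable from an initial state through g_∞-avoiding states. -/
/-- the policy works (every infinite run from an initial state hits
the goal) iff there is no state, reachable via g∞-avoiding states from an initial
state, lying on a g∞-avoiding cycle. -/
theorem statement6 {Ω : Type} [Finite Ω] (S₀ : Set Ω) (ΦB : Ω → Set Ω)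
    (ginf : Ω → Prop)
    (htotal : ∀ w : Ω, (ΦB w).Nonempty) :
    (∀ f : ℕ → Ω, f 0 ∈ S₀ → (∀ i, f (i + 1) ∈ ΦB (f i)) → ∃ i, ginf (f i)) ↔
    ¬ ∃ (w : Ω) (f : ℕ → Ω) (k : ℕ) (c : ℕ → Ω) (l : ℕ),
        -- w is reachable from an initial state through g∞-avoiding states
        f 0 ∈ S₀ ∧ (∀ i < k, f (i + 1) ∈ ΦB (f i)) ∧ (∀ i ≤ k, ¬ ginf (f i)) ∧
        f k = w ∧
        -- w lies on a g∞-avoiding cycle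
        c 0 = w ∧ 0 < l ∧ (∀ i < l, c (i + 1) ∈ ΦB (c i)) ∧ c l = w ∧
        (∀ i ≤ l, ¬ ginf (c i)) := by
  constructor
  · rintro h ⟨w, f, k, c, l, h0, hstep, havoid, hfk, hc0, hl, hcstep, hcl, hcavoid⟩
    -- build an infinite avoiding run
    set g : ℕ → Ω := fun n => if n ≤ k then f n else c ((n - k) % l) with hg
    have hmod : ∀ m, c ((m + 1) % l) ∈ ΦB (c (m % l)) := by
      intro m
      have hr : m % l < l := Nat.mod_lt _ hl
      rw [← Nat.mod_add_mod]
      rcases eq_or_lt_of_le (Nat.succ_le_of_lt hr) with he | hlt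
      · have he' : m % l + 1 = l := he
        have h1 : (m % l + 1) % l = 0 := by rw [he']; exact Nat.mod_self l
        rw [h1]
        have : c 0 = c (m % l + 1) := by rw [hc0, ← hcl, he']
        rw [this]
        exact hcstep _ hr
      · rw [Nat.mod_eq_of_lt hlt]
        exact hcstep _ hr
    have hge : ∀ n, k ≤ n → g n = c ((n - k) % l) := by
      intro n hn
      rcases eq_or_lt_of_le hn with he | hlt
      · simp [hg, ← he, Nat.sub_self, Nat.zero_mod, hc0, hfk]
      · simp [hg, Nat.not_le.mpr hlt]
    have hgstep : ∀ n, g (n + 1) ∈ ΦB (g n) := by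
      intro n
      by_cases hn : n + 1 ≤ k
      · have hn' : n ≤ k := le_of_lt hn
        simp only [hg, if_pos hn, if_pos hn']
        exact hstep n hn
      · have hkn : k ≤ n := by omega
        rw [hge n hkn, hge (n + 1) (by omega)]
        have : n + 1 - k = (n - k) + 1 := by omega
        rw [this]
        exact hmod _
    have hgavoid : ∀ n, ¬ ginf (g n) := by
      intro n
      by_cases hn : n ≤ k
      · simpa [hg, hn] using havoid n hn
      · rw [hge n (by omega)]
        exact hcavoid _ (le_of_lt (Nat.mod_lt _ hl))
    have h0' : g 0 ∈ S₀ := by simpa [hg] using h0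
    obtain ⟨i, hi⟩ := h g h0' hgstep
    exact hgavoid i hi
  · intro h f h0 hstep
    by_contra hng
    push_neg at hng
    obtain ⟨i, j, hij, hfij⟩ := Finite.exists_ne_map_eq_of_infinite f
    wlog hlt : i < j generalizing i j
    · exact this j i hij.symm hfij.symm (by omega)
    exact h ⟨f i, f, i, fun n => f (i + n), j - i,
      h0, fun m _ => hstep m, fun m _ => hng m, rfl,
      rfl, by omega, fun m _ => by show f (i + (m+1)) ∈ ΦB (f (i+m)); rw [show i + (m+1) = (i+m)+1 by omega]; exact hstep _,
      by show f (i + (j - i)) = f i; rw [show i + (j - i) = j by omega]; exact hfij.symm, fun m _ => hng _⟩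
end
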